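/- Let μ = (a_1,…,a_n) be a weak composition of n with at least one positive part, and let S_μ be the set of all permutations (words) of the multiset containing a_i copies of i for each i. Then ∑_{m ≥ 0} (∏_{i=1}^{n} C(m+1, a_i)) t^m = (∑_{w ∈ S_μ} t^{n−1−des(w)}) / (1−t)^{n+1} as formal power series. -/

import Mathlib

/-!
Coefficientwise, since `∑ₘ C(m + r, n) tᵐ = tⁿ⁻ʳ / (1 - t)ⁿ⁺¹` for `r ≤ n`, the identity says
`∏ᵥ C(m + 1, a v) = ∑_{w ∈ S_μ} C(m + 1 + des w, n)`. The left side counts families of sets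
`Fᵥ ⊆ {0, …, m}` with `#Fᵥ = a v`. Listing the pairs `(x, v)` with `x ∈ Fᵥ` increasingly in `x`
and, for equal `x`, decreasingly in `v`, reads off a word `w ∈ S_μ` together with a weakly
increasing sequence of values that may stay constant only at descents of `w`. Adding to the
`j`-th value the number of descents of `w` before `j` makes these sequences exactly the strictly
increasing ones in `{0, …, m + des w}`, of which there are `C(m + 1 + des w, n)`.
-/

open Finset PowerSeries

/-- The number of descents of a word given as a list: indices `i` with `l_i > l_{i+1}`. -/
def des (l : List ℕ) : ℕ := (l.zip l.tail).countP (fun p => p.2 < p.1)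

namespace PowerSeries

lemma mk_choose_add_eq_X_pow_mul {S : Type*} [CommRing S] {n r : ℕ} (hr : r ≤ n) :
    (PowerSeries.mk fun m => ((m + r).choose n : S)) =
      X ^ (n - r) * PowerSeries.mk fun m => ((n + m).choose n : S) := by
  ext m
  rw [coeff_X_pow_mul', coeff_mk]
  split_ifs with h
  · rw [coeff_mk, show m + r = n + (m - (n - r)) by omega]
  · rw [Nat.choose_eq_zero_of_lt (by omega), Nat.cast_zero]

lemma mk_choose_add_mul_one_sub_pow {S : Type*} [CommRing S] {n r : ℕ} (hr : r ≤ n) :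
    (PowerSeries.mk fun m => ((m + r).choose n : S)) * (1 - X) ^ (n + 1) = X ^ (n - r) := by
  rw [mk_choose_add_eq_X_pow_mul hr, mul_assoc, mk_add_choose_mul_one_sub_pow_eq_one, mul_one]

end PowerSeries

namespace List

lemma countP_ofFn {α : Type*} {k : ℕ} (p : α → Bool) (f : Fin k → α) :
    (ofFn f).countP p = #{i | p (f i)} := by
  induction k with
  | zero => simp
  | succ k ih =>
    rw [ofFn_succ, countP_cons, ih, Fin.card_filter_univ_succ]
    split_ifs <;> simp_all

lemma zip_tail_ofFn {α : Type*} {N : ℕ} (g : Fin (N + 1) → α) :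
    (ofFn g).zip (ofFn g).tail = ofFn fun k : Fin N => (g k.castSucc, g k.succ) := by
  apply ext_getElem
  · simp
  · intro i _ _
    simp only [getElem_zip, getElem_tail, List.getElem_ofFn]
    rfl

end List

lemma card_strictMono_eq_choose (α : Type*) [LinearOrder α] [Fintype α] (k : ℕ) :
    #{y : Fin k → α | StrictMono y} = (Fintype.card α).choose k := by
  rw [← card_univ, ← card_powersetCard]
  refine card_nbij (fun y => univ.image y) (fun y hy => ?_) (fun y hy y' hy' h => ?_)
    fun s hs => ?_
  · simp only [coe_filter, mem_univ, true_and, Set.mem_ofPred_eq] at hy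
    simp [card_image_of_injective _ hy.injective]
  · simp only [coe_filter, mem_univ, true_and, Set.mem_ofPred_eq] at hy hy'
    rw [← hy.range_inj hy']
    simpa [← coe_inj] using h
  · have hs : #s = k := (mem_powersetCard.1 hs).2
    refine ⟨s.orderEmbOfFin hs, by simp [(s.orderEmbOfFin hs).strictMono], ?_⟩
    simp

namespace MultisetEulerian

variable {V : Type*} [LinearOrder V] {N : ℕ}

/-- Ordering `X × Vᵒᵈ` lexicographically, `x` is compatible with `w` when it is weakly increasing
and `x j = x (j + 1)` only at descents of `w`. -/
def compatibleValues (X : Type*) [LinearOrder X] [Fintype X] {k : ℕ} (w : Fin k → V) :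
    Finset (Fin k → X) :=
  {x | StrictMono fun j => toLex (x j, OrderDual.toDual (w j))}

@[simp]
lemma mem_compatibleValues {X : Type*} [LinearOrder X] [Fintype X] {k : ℕ} {w : Fin k → V}
    {x : Fin k → X} :
    x ∈ compatibleValues X w ↔ StrictMono fun j => toLex (x j, OrderDual.toDual (w j)) := by
  simp [compatibleValues]

def descents (w : Fin (N + 1) → V) : Finset (Fin N) := {k | w k.succ < w k.castSucc}

lemma descents_comp {W : Type*} [LinearOrder W] {f : V → W} (hf : StrictMono f)
    (w : Fin (N + 1) → V) : descents (f ∘ w) = descents w := by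
  simp [descents, hf.lt_iff_lt]

lemma des_ofFn (g : Fin (N + 1) → ℕ) : des (List.ofFn g) = #(descents g) := by
  rw [des, List.zip_tail_ofFn, List.countP_ofFn]
  simp [descents]

def descentsBefore (w : Fin (N + 1) → V) (j : Fin (N + 1)) : ℕ := #{k ∈ descents w | k.succ ≤ j}

lemma descentsBefore_le (w : Fin (N + 1) → V) (j : Fin (N + 1)) :
    descentsBefore w j ≤ #(descents w) :=
  card_filter_le _ _

lemma descentsBefore_last (w : Fin (N + 1) → V) :
    descentsBefore w (Fin.last N) = #(descents w) := by
  simp [descentsBefore, Fin.le_last]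

lemma descentsBefore_succ (w : Fin (N + 1) → V) (k : Fin N) :
    descentsBefore w k.succ =
      descentsBefore w k.castSucc + if w k.succ < w k.castSucc then 1 else 0 := by
  simp only [descentsBefore, Fin.succ_le_succ_iff, Fin.succ_le_castSucc_iff]
  split_ifs with hk
  · rw [← card_insert_of_notMem (s := {i ∈ descents w | i < k}) (a := k) (by simp)]
    congr 1
    ext i
    simp only [descents, mem_filter, mem_univ, true_and, mem_insert]
    grind
  · rw [add_zero]
    congr 1
    ext i
    simp only [descents, mem_filter, mem_univ, true_and]
    grind

lemma strictMono_toLex_iff {X : Type*} [LinearOrder X] (w : Fin (N + 1) → V)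
    (x : Fin (N + 1) → X) :
    StrictMono (fun j => toLex (x j, OrderDual.toDual (w j))) ↔
      ∀ k : Fin N, x k.castSucc < x k.succ ∨ x k.castSucc = x k.succ ∧ w k.succ < w k.castSucc := by
  simp only [Fin.strictMono_iff_lt_succ, Prod.Lex.toLex_lt_toLex, OrderDual.toDual_lt_toDual]

lemma strictMono_add_descentsBefore_iff {M : ℕ} (w : Fin (N + 1) → V)
    (x : Fin (N + 1) → Fin M) :
    StrictMono (fun j => (x j : ℕ) + descentsBefore w j) ↔
      StrictMono fun j => toLex (x j, OrderDual.toDual (w j)) := by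
  rw [Fin.strictMono_iff_lt_succ, strictMono_toLex_iff]
  refine forall_congr' fun k => ?_
  rw [descentsBefore_succ, Fin.lt_def, Fin.ext_iff]
  split_ifs with hk
  · simp only [hk, and_true]
    omega
  · simp only [hk, and_false, or_false, add_zero]
    omega

variable {w : Fin (N + 1) → V} {f : Fin (N + 1) → ℕ}

lemma descentsBefore_le_of_strictMono (hf : StrictMono f) (j : Fin (N + 1)) :
    descentsBefore w j ≤ f j := by
  induction j using Fin.induction with
  | zero => simp [descentsBefore]
  | succ k ih =>
    have := hf k.castSucc_lt_succ
    rw [descentsBefore_succ]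
    split_ifs <;> omega

lemma monotone_sub_descentsBefore (hf : StrictMono f) :
    Monotone fun j => f j - descentsBefore w j := by
  refine Fin.monotone_iff_le_succ.2 fun k => ?_
  have := hf k.castSucc_lt_succ
  have := descentsBefore_le_of_strictMono (w := w) hf k.castSucc
  simp only [descentsBefore_succ]
  split_ifs <;> omega

lemma card_compatibleValues (w : Fin (N + 1) → V) (M : ℕ) :
    #(compatibleValues (Fin (M + 1)) w) = (M + 1 + #(descents w)).choose (N + 1) := by
  rw [← Fintype.card_fin (M + 1 + #(descents w)), ← card_strictMono_eq_choose]
  refine card_bij' (fun x _ j => ⟨x j + descentsBefore w j, ?_⟩)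
    (fun y hy j => ⟨y j - descentsBefore w j, ?_⟩) ?_ ?_ ?_ ?_
  · have := (x j).isLt
    have := descentsBefore_le w j
    omega
  · have hy : StrictMono fun j => (y j : ℕ) := (mem_filter.1 hy).2
    have : (y j : ℕ) - descentsBefore w j ≤ y (Fin.last N) - descentsBefore w (Fin.last N) :=
      monotone_sub_descentsBefore hy (Fin.le_last j)
    have := (y (Fin.last N)).isLt
    have := descentsBefore_last w
    omega
  · intro x hx
    simp only [mem_filter, mem_univ, true_and]
    exact (strictMono_add_descentsBefore_iff w x).2 (mem_compatibleValues.1 hx)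
  · intro y hy
    have hy : StrictMono fun j => (y j : ℕ) := (mem_filter.1 hy).2
    rw [mem_compatibleValues, ← strictMono_add_descentsBefore_iff w]
    convert hy using 2 with j
    exact Nat.sub_add_cancel (descentsBefore_le_of_strictMono hy j)
  · intro x _
    simp
  · intro y hy
    have hy : StrictMono fun j => (y j : ℕ) := (mem_filter.1 hy).2
    ext j
    exact Nat.sub_add_cancel (descentsBefore_le_of_strictMono hy j)

section valueSets

variable {X : Type*} [LinearOrder X] {k : ℕ}

def valueSets (w : Fin k → V) (x : Fin k → X) (v : V) : Finset X :=
  ({j | w j = v} : Finset (Fin k)).image x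

lemma mem_range_iff_mem_valueSets {w : Fin k → V} {x : Fin k → X} {e : Lex (X × Vᵒᵈ)} :
    e ∈ Set.range (fun j => toLex (x j, OrderDual.toDual (w j))) ↔
      (ofLex e).1 ∈ valueSets w x (OrderDual.ofDual (ofLex e).2) := by
  simp only [valueSets, mem_image, mem_filter, mem_univ, true_and, Set.mem_range]
  refine exists_congr fun j => ?_
  rw [← toLex_ofLex e, EmbeddingLike.apply_eq_iff_eq, ofLex_toLex, Prod.ext_iff]
  exact and_comm

lemma card_valueSets [Fintype X] {w : Fin k → V} {x : Fin k → X}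
    (hx : x ∈ compatibleValues X w) (v : V) :
    #(valueSets w x v) = #{j | w j = v} := by
  refine card_image_of_injOn fun i hi j hj hij => (mem_compatibleValues.1 hx).injective ?_
  simp_all

lemma eq_of_valueSets_eq [Fintype X] {w w' : Fin k → V} {x x' : Fin k → X}
    (hx : x ∈ compatibleValues X w) (hx' : x' ∈ compatibleValues X w')
    (h : valueSets w x = valueSets w' x') : w = w' ∧ x = x' := by
  have hrange := ((mem_compatibleValues.1 hx).range_inj (mem_compatibleValues.1 hx')).1 <|
    Set.ext fun e => by rw [mem_range_iff_mem_valueSets, mem_range_iff_mem_valueSets, h]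
  simp only [funext_iff, EmbeddingLike.apply_eq_iff_eq, Prod.mk.injEq] at hrange
  exact ⟨funext fun j => (hrange j).2, funext fun j => (hrange j).1⟩

lemma exists_valueSets_eq [Fintype X] [Fintype V] (f : V → Finset X) (hf : ∑ v, #(f v) = k) :
    ∃ w : Fin k → V, ∃ x ∈ compatibleValues X w, valueSets w x = f := by
  let E : Finset (Lex (X × Vᵒᵈ)) :=
    (univ.sigma f).image fun p => toLex (p.2, OrderDual.toDual p.1)
  have hE : #E = k := by
    rw [card_image_of_injective _ fun ⟨v, u⟩ ⟨v', u'⟩ h => by simp_all]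
    simp [hf]
  let g := E.orderEmbOfFin hE
  refine ⟨fun j => OrderDual.ofDual (ofLex (g j)).2, fun j => (ofLex (g j)).1,
    mem_compatibleValues.2 g.strictMono, ?_⟩
  ext v u
  have := mem_range_iff_mem_valueSets (w := fun j => OrderDual.ofDual (ofLex (g j)).2)
    (x := fun j => (ofLex (g j)).1) (e := toLex (u, OrderDual.toDual v))
  simp only [ofLex_toLex, OrderDual.ofDual_toDual] at this
  rw [← this]
  change _ ∈ Set.range g ↔ _
  simp [g, range_orderEmbOfFin, E]

theorem sum_card_compatibleValues [Fintype X] [Fintype V] (a : V → ℕ) (hsum : ∑ v, a v = k) :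
    ∑ w ∈ univ.filter (fun w : Fin k → V => ∀ v, #{i | w i = v} = a v),
        #(compatibleValues X w) = ∏ v, (Fintype.card X).choose (a v) := by
  have hprod : ∏ v, (Fintype.card X).choose (a v) =
      #(Fintype.piFinset fun v => powersetCard (a v) (univ : Finset X)) := by
    simp
  rw [hprod, ← card_sigma]
  refine card_nbij (fun p => valueSets p.1 p.2) ?_ ?_ ?_
  · rintro ⟨w, x⟩ hp
    simp only [mem_coe, mem_sigma, mem_filter, mem_univ, true_and] at hp
    simp [card_valueSets hp.2, hp.1]
  · rintro ⟨w, x⟩ hp ⟨w', x'⟩ hp' h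
    simp only [coe_sigma, Set.mem_sigma_iff, coe_filter, mem_univ, true_and, mem_coe] at hp hp'
    obtain ⟨rfl, rfl⟩ := eq_of_valueSets_eq hp.2 hp'.2 h
    rfl
  · intro f hf
    simp only [Fintype.coe_piFinset, Set.mem_pi, Set.mem_univ, mem_coe, mem_powersetCard,
      subset_univ, true_and, forall_const] at hf
    obtain ⟨w, x, hx, rfl⟩ := exists_valueSets_eq (k := k) f (by simp [hf, hsum])
    exact ⟨⟨w, x⟩, by simp [hx, ← card_valueSets hx, hf], rfl⟩

end valueSets

theorem prod_choose_eq_sum_choose_descents [Fintype V] (a : V → ℕ) (hsum : ∑ v, a v = N + 1)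
    (M : ℕ) :
    ∏ v, (M + 1).choose (a v) =
      ∑ w ∈ univ.filter (fun w : Fin (N + 1) → V => ∀ v, #{i | w i = v} = a v),
        (M + 1 + #(descents w)).choose (N + 1) := by
  simp_rw [← card_compatibleValues]
  rw [sum_card_compatibleValues a hsum, Fintype.card_fin]

end MultisetEulerian

open MultisetEulerian

theorem stmt_13_general (n : ℕ) (hn : 0 < n) (a : Fin n → ℕ)
    (hsum : ∑ i, a i = n) :
    (PowerSeries.mk fun m => ∏ i, ((m + 1).choose (a i) : ℤ)) *
        (1 - PowerSeries.X) ^ (n + 1) =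
      ∑ w ∈ Finset.univ.filter
          (fun w : Fin n → Fin n =>
            ∀ v : Fin n, (Finset.univ.filter (fun i => w i = v)).card = a v),
        (PowerSeries.X : PowerSeries ℤ) ^ (n - 1 - des (List.ofFn fun i => (w i : ℕ) + 1)) := by
  obtain ⟨N, rfl⟩ : ∃ N, n = N + 1 := ⟨n - 1, by omega⟩
  have hcoeff (m : ℕ) : ∏ i, (m + 1).choose (a i) =
      ∑ w ∈ univ.filter (fun w : Fin (N + 1) → Fin (N + 1) => ∀ v, #{i | w i = v} = a v),
        (m + 1 + #(descents w)).choose (N + 1) := by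
    -- the filters agree up to their decidability instances
    convert prod_choose_eq_sum_choose_descents a hsum m
  have hseries : (PowerSeries.mk fun m => ∏ i, ((m + 1).choose (a i) : ℤ)) =
      ∑ w ∈ univ.filter (fun w : Fin (N + 1) → Fin (N + 1) => ∀ v, #{i | w i = v} = a v),
        PowerSeries.mk fun m => ((m + (1 + #(descents w))).choose (N + 1) : ℤ) := by
    ext m
    simp only [coeff_mk, map_sum, ← add_assoc]
    exact_mod_cast hcoeff m
  rw [hseries, sum_mul]
  refine sum_congr rfl fun w _ => ?_
  have hdes : descents (fun i => (w i : ℕ) + 1) = descents w :=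
    descents_comp (f := fun v : Fin (N + 1) => (v : ℕ) + 1) (fun _ _ h => by simpa) w
  have hcard : #(descents w) ≤ N := (descents w).card_le_univ.trans_eq (Fintype.card_fin N)
  rw [mk_choose_add_mul_one_sub_pow (by omega), des_ofFn, hdes]
  congr 1
  omega

theorem stmt_13 (n : ℕ) (hn : 0 < n) (a : Fin n → ℕ)
    (hsum : ∑ i, a i = n) (hpos : ∃ i, 0 < a i) :
    (PowerSeries.mk fun m => ∏ i, ((m + 1).choose (a i) : ℤ)) *
        (1 - PowerSeries.X) ^ (n + 1) =
      ∑ w ∈ Finset.univ.filter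
          (fun w : Fin n → Fin n =>
            ∀ v : Fin n, (Finset.univ.filter (fun i => w i = v)).card = a v),
        (PowerSeries.X : PowerSeries ℤ) ^ (n - 1 - des (List.ofFn fun i => (w i : ℕ) + 1)) :=
  stmt_13_general n hn a hsum
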